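/- Let V : ℤ^d → ℝ be p-periodic and fix θ₂,…,θ_d ∈ ℂ. For every M > 0 there exists T > 0 such that for all t ∈ ℂ with Im(t) ≥ T, every eigenvalue λ ∈ ℂ of the matrix Ĥ_{p,(t,θ₂,…,θ_d)} satisfies |λ| ≥ M. (Consequently, every analytic eigenvalue branch of t ↦ Ĥ_{p,(t,θ₂,…,θ_d)} is a non-constant function of t.) -/

import Mathlib

noncomputable section

/-- `V : ℤ^d → ℝ` is `p`-periodic. -/
def IsPeriodic {d : ℕ} (p : Fin d → ℕ) (V : (Fin d → ℤ) → ℝ) : Prop :=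
  ∀ (n : Fin d → ℤ) (j : Fin d), V (Function.update n j (n j + (p j : ℤ))) = V n

/-- Fourier coefficient `V̂(k)` for `k ∈ 𝔹`. -/
def Vhat {d : ℕ} (p : Fin d → ℕ) (V : (Fin d → ℤ) → ℝ) (k : ∀ j, Fin (p j)) : ℂ :=
  (∏ j, (p j : ℂ))⁻¹ *
    ∑ n : ∀ j, Fin (p j),
      (V (fun j => (n j : ℤ) + 1) : ℂ) *
        Complex.exp (-(2 * Real.pi * Complex.I) *
          ∑ j, (((k j : ℕ) : ℂ) / (p j : ℂ)) * (((n j : ℕ) : ℂ) + 1))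

/-- Floquet matrix `Ĥ_{p,θ}`. -/
def floquet {d : ℕ} (p : Fin d → ℕ) (V : (Fin d → ℤ) → ℝ) (θ : Fin d → ℂ) :
    Matrix (∀ j, Fin (p j)) (∀ j, Fin (p j)) ℂ :=
  fun l m =>
    (if l = m then ∑ j, 2 * Complex.cos (2 * Real.pi * (((l j : ℕ) : ℂ) / (p j : ℂ) + θ j))
     else 0) + Vhat p V (l - m)

/-- `|cos z| ≤ e^{|Im z|}`. -/
lemma stmt16_abs_cos_le (z : ℂ) : ‖Complex.cos z‖ ≤ Real.exp |z.im| := by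
  rw [Complex.cos, norm_div]
  have h1 : ‖Complex.exp (z * Complex.I) + Complex.exp (-z * Complex.I)‖
      ≤ Real.exp (-z.im) + Real.exp z.im := by
    refine (norm_add_le _ _).trans ?_
    rw [Complex.norm_exp, Complex.norm_exp]
    simp [Complex.mul_re]
  have h2 : Real.exp (-z.im) + Real.exp z.im ≤ 2 * Real.exp |z.im| := by
    have := Real.exp_le_exp.2 (neg_le_abs z.im)
    have := Real.exp_le_exp.2 (le_abs_self z.im)
    linarith
  have h3 : ‖(2 : ℂ)‖ = 2 := by norm_num
  rw [h3]
  linarith [h1.trans h2]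

/-- `e^{Im z} - e^{-Im z} ≤ 2 |cos z|`. -/
lemma stmt16_le_two_abs_cos (z : ℂ) :
    Real.exp z.im - Real.exp (-z.im) ≤ 2 * ‖Complex.cos z‖ := by
  have key : Complex.exp (-z * Complex.I) = 2 * Complex.cos z - Complex.exp (z * Complex.I) := by
    rw [Complex.cos]; ring
  have tri : ‖2 * Complex.cos z - Complex.exp (z * Complex.I)‖
      ≤ ‖2 * Complex.cos z‖ + ‖Complex.exp (z * Complex.I)‖ := by
    simpa [sub_eq_add_neg] using
      norm_add_le (2 * Complex.cos z) (-(Complex.exp (z * Complex.I)))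
  have h1 := key ▸ tri
  rw [Complex.norm_exp, Complex.norm_exp, norm_mul] at h1
  have h2 : ‖(2 : ℂ)‖ = 2 := by norm_num
  rw [h2] at h1
  have e1 : (-z * Complex.I).re = z.im := by simp [Complex.mul_re]
  have e2 : (z * Complex.I).re = -z.im := by simp [Complex.mul_re]
  rw [e1, e2] at h1
  linarith

/-- Uniform bound on the Fourier coefficients. -/
lemma stmt16_Vhat_bound {d : ℕ} (p : Fin d → ℕ) (V : (Fin d → ℤ) → ℝ) (k : ∀ j, Fin (p j)) :
    ‖Vhat p V k‖ ≤
      (∏ j, (p j : ℝ))⁻¹ * ∑ n : ∀ j, Fin (p j), |V (fun j => (n j : ℤ) + 1)| := by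
  rw [Vhat, norm_mul]
  have h1 : ‖(∏ j, (p j : ℂ))⁻¹‖ = (∏ j, (p j : ℝ))⁻¹ := by
    rw [norm_inv, norm_prod]
    congr 1
    exact Finset.prod_congr rfl fun j _ => Complex.norm_natCast _
  rw [h1]
  gcongr
  refine (norm_sum_le _ _).trans ?_
  refine le_of_eq (Finset.sum_congr rfl fun n _ => ?_)
  rw [norm_mul, Complex.norm_real, Real.norm_eq_abs]
  have hs : (∑ j, (((k j : ℕ) : ℂ) / (p j : ℂ)) * (((n j : ℕ) : ℂ) + 1)) =
      (((∑ j, ((k j : ℕ) : ℝ) / ((p j : ℕ) : ℝ) * (((n j : ℕ) : ℝ) + 1)) : ℝ) : ℂ) := by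
    push_cast; ring
  rw [hs, Complex.norm_exp]
  have h0 : (-(2 * (Real.pi : ℂ) * Complex.I) *
      ((∑ j, ((k j : ℕ) : ℝ) / ((p j : ℕ) : ℝ) * (((n j : ℕ) : ℝ) + 1) : ℝ) : ℂ)).re = 0 := by
    simp [Complex.mul_re]
  rw [h0, Real.exp_zero, mul_one]

/-- Roots of the characteristic polynomial admit eigenvectors. -/
lemma stmt16_exists_eigvec {n : Type*} [Fintype n] [DecidableEq n] (A : Matrix n n ℂ) (lam : ℂ)
    (h : A.charpoly.eval lam = 0) :
    ∃ v ≠ 0, A.mulVec v = lam • v := by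
  have hdet : (lam • (1 : Matrix n n ℂ) - A).det = 0 := by
    have h1 : ((A.charmatrix).map (Polynomial.evalRingHom lam)).det = 0 := by
      rw [← RingHom.mapMatrix_apply, ← RingHom.map_det]
      exact h
    have h2 : (A.charmatrix).map (Polynomial.evalRingHom lam) = lam • 1 - A := by
      ext i j
      by_cases hij : i = j
      · subst hij
        simp [Matrix.charmatrix_apply_eq, Matrix.smul_apply, Matrix.one_apply]
      · simp [Matrix.charmatrix_apply_ne _ _ _ hij, Matrix.smul_apply, Matrix.one_apply, hij]
    rwa [h2] at h1
  obtain ⟨v, hv0, hv⟩ := (Matrix.exists_mulVec_eq_zero_iff).2 hdet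
  refine ⟨v, hv0, ?_⟩
  rw [Matrix.sub_mulVec, Matrix.smul_mulVec, Matrix.one_mulVec, sub_eq_zero] at hv
  exact hv.symm

/-- **Eigenvalues escape as `Im θ₁ → ∞`.** Let `V` be `p`-periodic and fix
`θ₂, …, θ_d ∈ ℂ` (encoded by a vector `θ` whose first entry gets replaced). For every
`M > 0` there is `T > 0` such that whenever `Im t ≥ T`, every eigenvalue `λ` (root of the
characteristic polynomial) of `Ĥ_{p,(t,θ₂,…,θ_d)}` satisfies `|λ| ≥ M`. Consequently every
analytic eigenvalue branch of `t ↦ Ĥ_{p,(t,θ₂,…,θ_d)}` is non-constant. -/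
theorem stmt16 {d : ℕ} (hd : 0 < d) (p : Fin d → ℕ) (hp : ∀ j, 0 < p j)
    (V : (Fin d → ℤ) → ℝ) (hV : IsPeriodic p V) (θ : Fin d → ℂ) :
    ∀ M : ℝ, 0 < M → ∃ T : ℝ, 0 < T ∧ ∀ t : ℂ, T ≤ t.im →
      ∀ lam ∈ (floquet p V (Function.update θ ⟨0, hd⟩ t)).charpoly.roots,
        M ≤ ‖lam‖ := by
  intro M hM
  set j0 : Fin d := ⟨0, hd⟩ with hj0
  set B : ℝ := (∏ j, (p j : ℝ))⁻¹ * ∑ n : ∀ j, Fin (p j), |V (fun j => (n j : ℤ) + 1)|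
    with hBdef
  have hB0 : 0 ≤ B := by
    apply mul_nonneg
    · positivity
    · exact Finset.sum_nonneg fun n _ => abs_nonneg _
  set C : ℝ := ∑ j ∈ Finset.univ.erase j0, 2 * Real.exp (2 * Real.pi * |(θ j).im|) with hCdef
  have hC0 : 0 ≤ C :=
    Finset.sum_nonneg fun j _ => by positivity
  set N : ℝ := (Fintype.card (∀ j, Fin (p j)) : ℝ) with hNdef
  have hN0 : 0 ≤ N := Nat.cast_nonneg _
  set K : ℝ := M + 1 + C + (N + 1) * B with hKdef
  have hK0 : 0 < K := by positivity
  refine ⟨max 1 (Real.log K), lt_of_lt_of_le one_pos (le_max_left _ _), ?_⟩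
  intro t ht lam hlam
  have ht1 : (1 : ℝ) ≤ t.im := le_trans (le_max_left _ _) ht
  have htK : Real.log K ≤ t.im := le_trans (le_max_right _ _) ht
  set θ' : Fin d → ℂ := Function.update θ j0 t with hθ'
  set A : Matrix (∀ j, Fin (p j)) (∀ j, Fin (p j)) ℂ := floquet p V θ' with hA
  -- extract eigenvector and apply Gershgorin
  have hne : A.charpoly ≠ 0 := A.charpoly_monic.ne_zero
  have hroot : A.charpoly.eval lam = 0 := (Polynomial.mem_roots hne).1 hlam
  obtain ⟨v, hv0, hv⟩ := stmt16_exists_eigvec A lam hroot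
  have heig : Module.End.HasEigenvalue (Matrix.toLin' A) lam := by
    apply Module.End.hasEigenvalue_of_hasEigenvector (x := v)
    refine ⟨Module.End.mem_eigenspace_iff.2 ?_, hv0⟩
    rw [Matrix.toLin'_apply, hv]
  obtain ⟨i, hi⟩ := eigenvalue_mem_ball heig
  rw [Metric.mem_closedBall, Complex.dist_eq] at hi
  -- bound the off-diagonal row sum
  have hrow : (∑ m ∈ Finset.univ.erase i, ‖A i m‖) ≤ N * B := by
    have h1 : ∀ m ∈ Finset.univ.erase i, ‖A i m‖ ≤ B := by
      intro m hm
      have hmi : i ≠ m := (Finset.ne_of_mem_erase hm).symm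
      have : A i m = Vhat p V (i - m) := by
        rw [hA]
        simp [floquet, hmi]
      rw [this]
      exact (stmt16_Vhat_bound p V _).trans_eq hBdef.symm
    calc (∑ m ∈ Finset.univ.erase i, ‖A i m‖) ≤ ∑ _m ∈ Finset.univ.erase i, B :=
          Finset.sum_le_sum h1
      _ = ((Finset.univ.erase i).card : ℝ) * B := by rw [Finset.sum_const, nsmul_eq_mul]
      _ ≤ N * B := by
          apply mul_le_mul_of_nonneg_right _ hB0
          rw [hNdef]
          exact_mod_cast Finset.card_le_card (Finset.subset_univ _)
  -- analyze the diagonal entry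
  set f : Fin d → ℂ :=
    fun j => 2 * Complex.cos (2 * Real.pi * (((i j : ℕ) : ℂ) / (p j : ℂ) + θ' j)) with hf
  set X : ℂ := f j0 with hX
  set Y : ℂ := ∑ j ∈ Finset.univ.erase j0, f j with hY
  set W : ℂ := Vhat p V (i - i) with hW
  have hAii : A i i = X + Y + W := by
    rw [hA]
    show (if i = i then ∑ j, f j else 0) + Vhat p V (i - i) = X + Y + W
    rw [if_pos rfl, ← Finset.add_sum_erase Finset.univ f (Finset.mem_univ j0)]
  have hWB : ‖W‖ ≤ B := by
    rw [hW]
    exact (stmt16_Vhat_bound p V _).trans_eq hBdef.symm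
  -- lower bound for X
  set E : ℝ := Real.exp (2 * Real.pi * t.im) with hE
  have hXlb : E - 1 ≤ ‖X‖ := by
    have hup : θ' j0 = t := Function.update_self j0 t θ
    set r : ℝ := ((i j0 : ℕ) : ℝ) / ((p j0 : ℕ) : ℝ) with hr
    have hcast : ((i j0 : ℕ) : ℂ) / ((p j0 : ℕ) : ℂ) = ((r : ℝ) : ℂ) := by
      rw [hr]; push_cast; ring
    have hXeq : X = 2 * Complex.cos (2 * Real.pi * ((r : ℂ) + t)) := by
      rw [hX, hf]; simp only [hup, hcast]
    have him : (2 * (Real.pi : ℂ) * ((r : ℂ) + t)).im = 2 * Real.pi * t.im := by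
      simp [Complex.mul_im]
    have hlb := stmt16_le_two_abs_cos (2 * (Real.pi : ℂ) * ((r : ℂ) + t))
    rw [him] at hlb
    have hexp1 : Real.exp (-(2 * Real.pi * t.im)) ≤ 1 := by
      rw [← Real.exp_zero]
      apply Real.exp_le_exp.2
      have hpi : (0:ℝ) < Real.pi := Real.pi_pos
      nlinarith
    have hnorm : ‖X‖ = 2 * ‖Complex.cos (2 * (Real.pi : ℂ) * ((r : ℂ) + t))‖ := by
      rw [hXeq, norm_mul]
      norm_num
    rw [hnorm, hE]
    linarith
  -- upper bound for Y
  have hYub : ‖Y‖ ≤ C := by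
    rw [hY, hCdef]
    refine (norm_sum_le _ _).trans (Finset.sum_le_sum fun j hj => ?_)
    have hjne : j ≠ j0 := Finset.ne_of_mem_erase hj
    have hup : θ' j = θ j := Function.update_of_ne hjne t θ
    set r : ℝ := ((i j : ℕ) : ℝ) / ((p j : ℕ) : ℝ) with hr
    have hcast : ((i j : ℕ) : ℂ) / ((p j : ℕ) : ℂ) = ((r : ℝ) : ℂ) := by
      rw [hr]; push_cast; ring
    have hfeq : f j = 2 * Complex.cos (2 * Real.pi * ((r : ℂ) + θ j)) := by
      rw [hf]; simp only [hup, hcast]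
    have him : (2 * (Real.pi : ℂ) * ((r : ℂ) + θ j)).im = 2 * Real.pi * (θ j).im := by
      simp [Complex.mul_im]
    have hub := stmt16_abs_cos_le (2 * (Real.pi : ℂ) * ((r : ℂ) + θ j))
    rw [him] at hub
    have habs : |2 * Real.pi * (θ j).im| = 2 * Real.pi * |(θ j).im| := by
      rw [abs_mul, abs_of_nonneg (by positivity : (0:ℝ) ≤ 2 * Real.pi)]
    rw [habs] at hub
    have hnorm : ‖f j‖ = 2 * ‖Complex.cos (2 * (Real.pi : ℂ) * ((r : ℂ) + θ j))‖ := by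
      rw [hfeq, norm_mul]
      norm_num
    rw [hnorm]
    linarith
  -- put everything together
  have htriag : ‖X‖ - ‖Y‖ - ‖W‖ ≤ ‖A i i‖ := by
    have e : X = (X + Y + W) - (Y + W) := by ring
    have h5 : ‖X‖ ≤ ‖X + Y + W‖ + ‖Y + W‖ := by
      conv_lhs => rw [e]
      exact norm_sub_le _ _
    have h6 : ‖Y + W‖ ≤ ‖Y‖ + ‖W‖ := norm_add_le _ _
    rw [hAii]
    linarith
  have hlam1 : ‖A i i‖ - ‖lam‖ ≤ ∑ m ∈ Finset.univ.erase i, ‖A i m‖ := by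
    have := norm_sub_norm_le (A i i) lam
    rw [norm_sub_rev] at this
    have h7 : ‖lam - A i i‖ = ‖lam - A i i‖ := rfl
    linarith [hi]
  have hKE : K ≤ E := by
    have h8 : t.im ≤ 2 * Real.pi * t.im := by
      have hpi : (3:ℝ) < Real.pi := Real.pi_gt_three
      nlinarith
    calc K = Real.exp (Real.log K) := (Real.exp_log hK0).symm
      _ ≤ Real.exp (2 * Real.pi * t.im) := Real.exp_le_exp.2 (le_trans htK h8)
      _ = E := rfl
  rw [hKdef] at hKE
  linarith

end
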